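/- Let f : ℝ^d → ℝ be nonnegative and α²-strongly convex, and g : ℝ^d → ℝ be a nonnegative convex L-Lipschitz function. For λ ≥ 0 let z(λ) be the minimizer of f + λg. Then for any 0 ≤ λ ≤ λ' we have ‖z(λ') − z(λ)‖₂ ≤ (L/α²)·(λ' − λ). -/
import Mathlib


noncomputable def euclNorm {d : ℕ} (v : Fin d → ℝ) : ℝ := Real.sqrt (∑ i, v i ^ 2)

def StrongConvexW {d : ℕ} (m : ℝ) (f : (Fin d → ℝ) → ℝ) : Prop :=
  ∀ x y : Fin d → ℝ, ∀ t : ℝ, 0 ≤ t → t ≤ 1 →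
    f (t • x + (1 - t) • y) ≤ t * f x + (1 - t) * f y - m / 2 * (t * (1 - t)) * euclNorm (x - y) ^ 2

def LipschitzW {d : ℕ} (L : ℝ) (g : (Fin d → ℝ) → ℝ) : Prop :=
  ∀ x y : Fin d → ℝ, |g x - g y| ≤ L * euclNorm (x - y)

lemma euclNorm_nonneg {d : ℕ} (v : Fin d → ℝ) : 0 ≤ euclNorm v := Real.sqrt_nonneg _

lemma euclNorm_sub_comm {d : ℕ} (x y : Fin d → ℝ) : euclNorm (x - y) = euclNorm (y - x) := by
  unfold euclNorm
  congr 1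
  apply Finset.sum_congr rfl
  intro i _
  simp [Pi.sub_apply]
  ring

lemma min_strong {d : ℕ} (m : ℝ) (hm : 0 ≤ m) (F : (Fin d → ℝ) → ℝ) (hF : StrongConvexW m F)
    (zz w : Fin d → ℝ) (hzz : ∀ v, F zz ≤ F v) :
    F zz + m / 2 * euclNorm (zz - w) ^ 2 ≤ F w := by
  set c := m / 2 * euclNorm (zz - w) ^ 2 with hc
  have hc0 : 0 ≤ c := mul_nonneg (by linarith) (sq_nonneg _)
  have key : ∀ t : ℝ, 0 ≤ t → t < 1 → F zz + c * t ≤ F w := by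
    intro t ht ht1
    have h1 := hF zz w t ht ht1.le
    have h2 := hzz (t • zz + (1 - t) • w)
    have h3 : 0 < 1 - t := by linarith
    rw [hc]
    nlinarith [h1, h2, h3]
  have hzw := hzz w
  by_contra hcon
  push_neg at hcon
  rcases eq_or_lt_of_le hc0 with h0 | h0
  · rw [← h0] at hcon; linarith
  · have h1 : (F w - F zz) / c < 1 := by rw [div_lt_one h0]; linarith
    have h2 : 0 ≤ (F w - F zz) / c := div_nonneg (by linarith) h0.le
    set t := ((F w - F zz) / c + 1) / 2 with htdef
    have hk := key t (by linarith) (by rw [htdef]; linarith)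
    have hcd : c * ((F w - F zz) / c) = F w - F zz := mul_div_cancel₀ _ h0.ne'
    nlinarith [hk, hcd, h0, h1]

/-- perturbation of strongly convex functions I (integrated form). -/
theorem stmt_0 {d : ℕ} (α L : ℝ) (hα : 0 < α) (hL : 0 ≤ L)
    (f g : (Fin d → ℝ) → ℝ)
    (hf0 : ∀ x, 0 ≤ f x) (hfsc : StrongConvexW (α ^ 2) f)
    (hg0 : ∀ x, 0 ≤ g x) (hgconv : ConvexOn ℝ Set.univ g) (hgL : LipschitzW L g)
    (z : ℝ → (Fin d → ℝ))
    (hz : ∀ l : ℝ, 0 ≤ l → ∀ w : Fin d → ℝ, f (z l) + l * g (z l) ≤ f w + l * g w)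
    (l l' : ℝ) (hl : 0 ≤ l) (hll' : l ≤ l') :
    euclNorm (z l' - z l) ≤ L / α ^ 2 * (l' - l) := by
  have hα2 : (0:ℝ) < α ^ 2 := by positivity
  have hl' : 0 ≤ l' := le_trans hl hll'
  -- strong convexity of f + λ g
  have hsc : ∀ lam : ℝ, 0 ≤ lam → StrongConvexW (α ^ 2) (fun x => f x + lam * g x) := by
    intro lam hlam x y t ht ht1
    have h1 := hfsc x y t ht ht1
    have h2 := hgconv.2 (Set.mem_univ x) (Set.mem_univ y) ht (by linarith : (0:ℝ) ≤ 1 - t)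
      (by ring)
    simp only [smul_eq_mul] at h2 ⊢
    nlinarith [mul_le_mul_of_nonneg_left h2 hlam]
  have hA := min_strong (α ^ 2) hα2.le (fun x => f x + l * g x) (hsc l hl)
    (z l) (z l') (hz l hl)
  have hB := min_strong (α ^ 2) hα2.le (fun x => f x + l' * g x) (hsc l' hl')
    (z l') (z l) (hz l' hl')
  set N := euclNorm (z l' - z l) with hN
  have hNeq : euclNorm (z l - z l') = N := euclNorm_sub_comm _ _
  rw [hNeq] at hA
  have hN0 : 0 ≤ N := euclNorm_nonneg _
  -- α² N² ≤ (l' - l) * (g (z l) - g (z l'))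
  have hsum : α ^ 2 * N ^ 2 ≤ (l' - l) * (g (z l) - g (z l')) := by nlinarith [hA, hB]
  have hLip : g (z l) - g (z l') ≤ L * N := by
    have := hgL (z l) (z l')
    rw [hNeq] at this
    exact le_trans (le_abs_self _) this
  have hmain : α ^ 2 * N ^ 2 ≤ (l' - l) * (L * N) := by
    nlinarith [hsum, mul_le_mul_of_nonneg_left hLip (by linarith : (0:ℝ) ≤ l' - l)]
  rcases eq_or_lt_of_le hN0 with h0 | h0
  · rw [← h0]; exact mul_nonneg (div_nonneg hL hα2.le) (by linarith)
  · rw [div_mul_eq_mul_div, le_div_iff₀ hα2]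
    nlinarith [hmain, h0]
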